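/- On ℝ^6 with standard inner product, standard orthonormal basis e_1, …, e_6, and standard complex structure J₀ (J₀e₁ = e₂, J₀e₂ = −e₁, J₀e₃ = e₄, J₀e₄ = −e₃, J₀e₅ = e₆, J₀e₆ = −e₅), let Re Ω₀ = e^{135} − e^{146} − e^{236} − e^{245}. If h is a symmetric bilinear form on ℝ^6 that is J₀-anti-invariant (h(J₀v, J₀w) = −h(v, w)) and satisfies h_*(Re Ω₀) = 0, then h = 0. That is, h ↦ h_*(Re Ω₀) is injective on the space Sym²₁₂ of J₀-anti-invariant symmetric bilinear forms. -/

import Mathlib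

noncomputable section

/-- The `i`-th standard basis vector of `ℝ^6`. -/
def sb (i : Fin 6) : EuclideanSpace ℝ (Fin 6) := EuclideanSpace.single i (1 : ℝ)

/-- The basic alternating 2-form `e^i ∧ e^j` on `ℝ^6` (determinant convention). -/
def form2 (i j : Fin 6) : (Fin 2 → EuclideanSpace ℝ (Fin 6)) → ℝ :=
  fun v => v 0 i * v 1 j - v 0 j * v 1 i

/-- The basic alternating 3-form `e^i ∧ e^j ∧ e^k` on `ℝ^6` (determinant convention). -/
def form3 (i j k : Fin 6) : (Fin 3 → EuclideanSpace ℝ (Fin 6)) → ℝ :=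
  fun v => Matrix.det !![v 0 i, v 0 j, v 0 k; v 1 i, v 1 j, v 1 k; v 2 i, v 2 j, v 2 k]

/-- The standard 2-form `ω₀ = e^{12} + e^{34} + e^{56}` (indices shifted to `0,…,5`). -/
def omega0 : (Fin 2 → EuclideanSpace ℝ (Fin 6)) → ℝ :=
  fun v => form2 0 1 v + form2 2 3 v + form2 4 5 v

/-- `Re Ω₀ = e^{135} − e^{146} − e^{236} − e^{245}` (indices shifted to `0,…,5`). -/
def reOmega0 : (Fin 3 → EuclideanSpace ℝ (Fin 6)) → ℝ :=
  fun v => form3 0 2 4 v - form3 0 3 5 v - form3 1 2 5 v - form3 1 3 4 v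

/-- The standard complex structure `J₀` on `ℝ^6`:
`J₀e₁ = e₂, J₀e₂ = −e₁, J₀e₃ = e₄, J₀e₄ = −e₃, J₀e₅ = e₆, J₀e₆ = −e₅`. -/
def J0 : EuclideanSpace ℝ (Fin 6) → EuclideanSpace ℝ (Fin 6) := fun v =>
  EuclideanSpace.single 0 (-(v 1)) + EuclideanSpace.single 1 (v 0) +
    EuclideanSpace.single 2 (-(v 3)) + EuclideanSpace.single 3 (v 2) +
    EuclideanSpace.single 4 (-(v 5)) + EuclideanSpace.single 5 (v 4)

/-- The pointwise value of the wedge product `α ∧ κ` of a 1-form `α` with a `k`-form `κ`. -/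
def wedge1 {E : Type*} [AddCommGroup E] [Module ℝ E] {k : ℕ}
    (α : E → ℝ) (κ : (Fin k → E) → ℝ) : (Fin (k + 1) → E) → ℝ :=
  fun v => ∑ i : Fin (k + 1), (-1 : ℝ) ^ (i : ℕ) * α (v i) * κ (fun j => v (i.succAbove j))

/-- The interior product `ι_x κ`: insertion of `x` into the first argument. -/
def ins {E : Type*} [AddCommGroup E] [Module ℝ E] {k : ℕ}
    (x : E) (κ : (Fin (k + 1) → E) → ℝ) : (Fin k → E) → ℝ :=
  fun v => κ (Fin.cons x v)

/-- `h_*κ := -∑ j, h(e_j, ·) ∧ ι_{e_j} κ`, computed in the basis `e`. -/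
def hStar {E : Type*} [AddCommGroup E] [Module ℝ E] {n k : ℕ}
    (e : Fin n → E) (h : E → E → ℝ) (κ : (Fin (k + 1) → E) → ℝ) : (Fin (k + 1) → E) → ℝ :=
  fun v => -∑ j : Fin n, wedge1 (fun w => h (e j) w) (ins (e j) κ) v

/-! Anti-invariance under `J₀` forces the Gram matrix of `h` in the basis `sb` to consist of
`2 × 2` blocks `[[a, b], [b, -a]]`, leaving twelve real unknowns `a_pq = h (sb (2p)) (sb (2q))`,
`b_pq = h (sb (2p)) (sb (2q+1))` with `p ≤ q`. The components of `h_*(Re Ω₀)` on basis triples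
recover them: each of `a₀₁, b₀₁, a₀₂, b₀₂, a₁₂, b₁₂` is, up to the factor `±2`, a single
component, while the diagonal unknowns satisfy the invertible systems
`a₀₀ + a₁₁ + a₂₂ = a₀₀ - a₁₁ - a₂₂ = a₀₀ - a₁₁ + a₂₂ = 0` and
`b₀₀ + b₁₁ - b₂₂ = b₀₀ - b₁₁ + b₂₂ = b₀₀ + b₁₁ + b₂₂ = 0`. -/

theorem hStar_apply_three {E : Type*} [AddCommGroup E] [Module ℝ E] {n : ℕ}
    (e : Fin n → E) (h : E → E → ℝ) (κ : (Fin 3 → E) → ℝ) (a b c : E) :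
    hStar e h κ ![a, b, c] =
      -∑ j, (h (e j) a * κ ![e j, b, c] - h (e j) b * κ ![e j, a, c]
        + h (e j) c * κ ![e j, a, b]) := by
  simp only [hStar, wedge1, ins]
  congr! 2 with j
  rw [Fin.sum_univ_three]
  have drop_one : (fun i => ![a, b, c] ((1 : Fin 3).succAbove i)) = ![a, c] := by
    ext i; fin_cases i <;> rfl
  have drop_two : (fun i => ![a, b, c] ((2 : Fin 3).succAbove i)) = ![a, b] := by
    ext i; fin_cases i <;> rfl
  simp [drop_one, drop_two, sub_eq_add_neg]

theorem form3_apply (a b c : Fin 6) (u v w : EuclideanSpace ℝ (Fin 6)) :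
    form3 a b c ![u, v, w] = u a * v b * w c - u a * v c * w b - u b * v a * w c
      + u b * v c * w a + u c * v a * w b - u c * v b * w a := by
  simp [form3, Matrix.det_fin_three]

theorem sb_apply (i j : Fin 6) : sb i j = if j = i then 1 else 0 :=
  PiLp.single_apply 2 ℝ i 1 j

theorem J0_J0 (v : EuclideanSpace ℝ (Fin 6)) : J0 (J0 v) = -v := by
  ext k; fin_cases k <;> simp [J0]

theorem J0_sb_zero : J0 (sb 0) = sb 1 := by
  ext k; fin_cases k <;> simp [J0, sb]

theorem J0_sb_two : J0 (sb 2) = sb 3 := by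
  ext k; fin_cases k <;> simp [J0, sb]

theorem J0_sb_four : J0 (sb 4) = sb 5 := by
  ext k; fin_cases k <;> simp [J0, sb]

section AntiInvariant

variable {R M : Type*} [CommRing R] [AddCommGroup M] [Module R M] (h : M →ₗ[R] M →ₗ[R] R)
  {J : M → M} (hJ : ∀ v, J (J v) = -v) (hanti : ∀ v w, h (J v) (J w) = -h v w)
include hJ hanti

theorem LinearMap.apply_map_left_eq_apply_map_right (v w : M) : h (J v) w = h v (J w) := by
  simpa [hJ] using hanti v (J w)

theorem LinearMap.apply_eq_of_antiInvariant {u u' w w' : M} (hu : J u = u') (hw : J w = w') :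
    h u' w' = -h u w ∧ h u' w = h u w' := by
  subst hu hw
  exact ⟨hanti u w, h.apply_map_left_eq_apply_map_right hJ hanti u w⟩

end AntiInvariant

theorem gram_eq_zero_of_hStar_reOmega0_eq_zero
    (h : EuclideanSpace ℝ (Fin 6) →ₗ[ℝ] EuclideanSpace ℝ (Fin 6) →ₗ[ℝ] ℝ)
    (hsymm : ∀ v w, h v w = h w v) (hanti : ∀ v w, h (J0 v) (J0 w) = -h v w)
    (hvan : hStar sb (fun a b => h a b) reOmega0 = 0) (i j : Fin 6) :
    h (sb i) (sb j) = 0 := by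
  have ev (x y z : Fin 6) : hStar sb (fun a b => h a b) reOmega0 ![sb x, sb y, sb z] = 0 :=
    congrFun hvan _
  have e012 := ev 0 1 2
  have e013 := ev 0 1 3
  have e014 := ev 0 1 4
  have e015 := ev 0 1 5
  have e023 := ev 0 2 3
  have e024 := ev 0 2 4
  have e025 := ev 0 2 5
  have e034 := ev 0 3 4
  have e035 := ev 0 3 5
  have e123 := ev 1 2 3
  have e125 := ev 1 2 5
  have e135 := ev 1 3 5
  simp only [hStar_apply_three, Fin.sum_univ_six, reOmega0, form3_apply, sb_apply, Fin.isValue,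
    Fin.reduceEq, ↓reduceIte, mul_zero, mul_one, sub_self, sub_zero, zero_sub, add_zero,
    zero_add, neg_zero, neg_eq_zero] at e012 e013 e014 e015 e023 e024 e025 e034 e035 e123 e125 e135
  obtain ⟨a00, -⟩ := h.apply_eq_of_antiInvariant J0_J0 hanti J0_sb_zero J0_sb_zero
  obtain ⟨a02, b02⟩ := h.apply_eq_of_antiInvariant J0_J0 hanti J0_sb_zero J0_sb_two
  obtain ⟨a04, b04⟩ := h.apply_eq_of_antiInvariant J0_J0 hanti J0_sb_zero J0_sb_four
  obtain ⟨a22, -⟩ := h.apply_eq_of_antiInvariant J0_J0 hanti J0_sb_two J0_sb_two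
  obtain ⟨a24, b24⟩ := h.apply_eq_of_antiInvariant J0_J0 hanti J0_sb_two J0_sb_four
  obtain ⟨a44, -⟩ := h.apply_eq_of_antiInvariant J0_J0 hanti J0_sb_four J0_sb_four
  -- linarith treats `h (sb x) (sb y)` and `h (sb y) (sb x)` as unrelated atoms
  have horient (x y : Fin 6) (_ : y < x) : h (sb x) (sb y) = h (sb y) (sb x) := hsymm _ _
  simp (disch := decide) only [horient] at *
  fin_cases i <;> fin_cases j <;>
    simp (disch := decide) only [Fin.reduceFinMk, Fin.isValue, horient] <;> linarith

/-- If `h` is a symmetric bilinear form on `ℝ^6` that is `J₀`-anti-invariant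
(`h(J₀v, J₀w) = −h(v, w)`) and satisfies `h_*(Re Ω₀) = 0`, then `h = 0`: the map
`h ↦ h_*(Re Ω₀)` is injective on `Sym²₁₂`. -/
theorem statement9
    (h : EuclideanSpace ℝ (Fin 6) →ₗ[ℝ] EuclideanSpace ℝ (Fin 6) →ₗ[ℝ] ℝ)
    (hsymm : ∀ v w, h v w = h w v)
    (hanti : ∀ v w, h (J0 v) (J0 w) = -h v w)
    (hvan : hStar sb (fun a b => h a b) reOmega0 = 0) :
    h = 0 := by
  refine LinearMap.ext_basis (EuclideanSpace.basisFun (Fin 6) ℝ).toBasis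
    (EuclideanSpace.basisFun (Fin 6) ℝ).toBasis fun i j => ?_
  simpa [sb] using gram_eq_zero_of_hStar_reOmega0_eq_zero h hsymm hanti hvan i j
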